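/- (Modified initial data improvement.) In the constant-field setting of Theorem 4.1, set z^1 = [Id − λR]⁻¹ w where w = ε⁻¹v^0 − R[E(t^0, x^0)]. Then z^1 = (1/λ) R w − (1/λ) R [Id − λR]⁻¹ w; consequently ‖z^1 − (1/λ)Rw‖ ≤ (1/λ)·((1+λ)/(1+λ²))·‖w‖, and the first-step error of the scheme started from the shifted point y^0 = x^0 + ε(v^0 ∧ B + ε E(t^0,x^0)) satisfies ‖x^1 − y^1‖ ≤ (Δt/λ)(K_x Δt + (1+λ)/(1+λ²))‖w‖. -/

import Mathlib

/-!
On `ℂ ≅ ℝ²` the rotation is `R w = -i w`, so `Id − λR` is multiplication by `1 + λi`. Applying `R`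
to `z − λ R z = w` and using `R² = −Id` gives `λ z = R w − R z`, the stated identity. Since
`|1 + λi| = √(1 + λ²) ≥ (1 + λ²)/(1 + λ)`, the remainder `(1/λ) R z` is bounded as claimed. The
shift is chosen so that `y⁰ − x⁰ = ε² R w = (Δt/λ) R w`; one step of each scheme then differs by
`Δt (z − (1/λ) R w)` plus the difference of the field terms, which the Lipschitz bound controls.
-/

/-- The unit planar rotation by -90° (`R² = −Id`, `‖R‖ = 1`):
`(w₁, w₂) ↦ (w₂, -w₁)`, i.e. multiplication by `-i` on `ℂ ≅ ℝ²`. -/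
noncomputable def Rrot (w : ℂ) : ℂ := -Complex.I * w

namespace Rrot

theorem smul (a : ℝ) (z : ℂ) : Rrot (a • z) = a • Rrot z := by
  simp only [Rrot, Complex.real_smul]; ring

theorem sub (z w : ℂ) : Rrot (z - w) = Rrot z - Rrot w := by
  simp only [Rrot]; ring

theorem Rrot_Rrot (z : ℂ) : Rrot (Rrot z) = -z := by
  simp only [Rrot]; linear_combination z * Complex.I_sq

@[simp]
theorem norm_eq (z : ℂ) : ‖Rrot z‖ = ‖z‖ := by
  simp [Rrot]

theorem sub_smul_eq_mul (lam : ℝ) (z : ℂ) : z - lam • Rrot z = z * (1 + lam * Complex.I) := by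
  simp only [Rrot, Complex.real_smul]; ring

end Rrot

theorem eq_inv_smul_Rrot_sub_of_sub_smul_Rrot_eq {lam : ℝ} (hlam : lam ≠ 0) {z w : ℂ}
    (hz : z - lam • Rrot z = w) : z = lam⁻¹ • Rrot w - lam⁻¹ • Rrot z := by
  have hRz : lam • z = Rrot w - Rrot z := by
    rw [← hz, Rrot.sub, Rrot.smul, Rrot.Rrot_Rrot, smul_neg]; abel
  rw [← smul_sub, ← hRz, inv_smul_smul₀ hlam]

theorem norm_sub_smul_Rrot (lam : ℝ) (z : ℂ) :
    ‖z - lam • Rrot z‖ = ‖z‖ * √(1 + lam ^ 2) := by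
  rw [Rrot.sub_smul_eq_mul, norm_mul, ← Complex.ofReal_one, Complex.norm_add_mul_I, one_pow]

theorem norm_le_of_sub_smul_Rrot_eq {lam : ℝ} (hlam : 0 ≤ lam) {z w : ℂ}
    (hz : z - lam • Rrot z = w) : ‖z‖ ≤ (1 + lam) / (1 + lam ^ 2) * ‖w‖ := by
  have hsqrt : √(1 + lam ^ 2) ≤ 1 + lam :=
    (Real.sqrt_le_left (by positivity)).2 (by nlinarith)
  have hpos : 0 < 1 + lam ^ 2 := by positivity
  rw [← hz, norm_sub_smul_Rrot, div_mul_eq_mul_div, le_div_iff₀ hpos]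
  calc ‖z‖ * (1 + lam ^ 2) = ‖z‖ * √(1 + lam ^ 2) * √(1 + lam ^ 2) := by
        rw [mul_assoc, Real.mul_self_sqrt hpos.le]
    _ ≤ ‖z‖ * √(1 + lam ^ 2) * (1 + lam) := by gcongr
    _ = (1 + lam) * (‖z‖ * √(1 + lam ^ 2)) := by ring

theorem norm_sub_inv_smul_Rrot_le {lam : ℝ} (hlam : 0 < lam) {z w : ℂ}
    (hz : z - lam • Rrot z = w) :
    ‖z - lam⁻¹ • Rrot w‖ ≤ lam⁻¹ * ((1 + lam) / (1 + lam ^ 2)) * ‖w‖ := by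
  have hrem : z - lam⁻¹ • Rrot w = -(lam⁻¹ • Rrot z) := by
    nth_rewrite 1 [eq_inv_smul_Rrot_sub_of_sub_smul_Rrot_eq hlam.ne' hz]; abel
  rw [hrem, norm_neg, norm_smul, Real.norm_of_nonneg (by positivity), Rrot.norm_eq, mul_assoc]
  exact mul_le_mul_of_nonneg_left (norm_le_of_sub_smul_Rrot_eq hlam.le hz) (by positivity)

theorem shifted_sub_eq_sq_smul_Rrot {ε : ℝ} (hε : ε ≠ 0) (E x0 v0 : ℂ) :
    x0 + ε • (Rrot v0 + ε • E) - x0 = ε ^ 2 • Rrot (ε⁻¹ • v0 - Rrot E) := by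
  rw [Rrot.sub, Rrot.Rrot_Rrot, Rrot.smul, smul_add, smul_sub, smul_neg, sq, mul_smul, mul_smul,
    smul_inv_smul₀ hε]
  abel

theorem norm_euler_step_sub_euler_step_le {V : Type*} [NormedAddCommGroup V] [NormedSpace ℝ V]
    {Δt K : ℝ} (hΔt : 0 ≤ Δt) {F : V → V} (hF : ∀ a b, ‖F a - F b‖ ≤ K * ‖a - b‖)
    {x0 y0 c : V} (hy0 : y0 = x0 + Δt • c) (z : V) :
    ‖x0 + Δt • F x0 + Δt • z - (y0 + Δt • F y0)‖ ≤ Δt * ‖z - c‖ + Δt * (K * ‖x0 - y0‖) := by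
  have hstep : x0 + Δt • F x0 + Δt • z - (y0 + Δt • F y0) = Δt • (z - c) + Δt • (F x0 - F y0) := by
    nth_rewrite 1 [hy0]
    rw [smul_sub, smul_sub]
    abel
  rw [hstep]
  refine (norm_add_le _ _).trans ?_
  rw [norm_smul, norm_smul, Real.norm_of_nonneg hΔt]
  gcongr
  exact hF x0 y0

theorem stmt17_general (ε Δt lam Kx : ℝ) (hε : 0 < ε) (hΔt : 0 < Δt)
    (hlam : lam = Δt / ε ^ 2)
    (E : ℂ → ℂ)
    (hlip : ∀ a b : ℂ, ‖Rrot (E a) - Rrot (E b)‖ ≤ Kx * ‖a - b‖)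
    (x0 v0 z1 x1 y0 y1 : ℂ)
    (hz1 : z1 - lam • Rrot z1 = ε⁻¹ • v0 - Rrot (E x0))
    (hx1 : x1 = x0 + Δt • Rrot (E x0) + Δt • z1)
    (hy0 : y0 = x0 + ε • (Rrot v0 + ε • E x0))
    (hy1 : y1 = y0 + Δt • Rrot (E y0)) :
    (z1 = lam⁻¹ • Rrot (ε⁻¹ • v0 - Rrot (E x0)) - lam⁻¹ • Rrot z1) ∧
    (‖z1 - lam⁻¹ • Rrot (ε⁻¹ • v0 - Rrot (E x0))‖
        ≤ lam⁻¹ * ((1 + lam) / (1 + lam ^ 2)) * ‖ε⁻¹ • v0 - Rrot (E x0)‖) ∧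
    (‖x1 - y1‖ ≤ (Δt / lam) * (Kx * Δt + (1 + lam) / (1 + lam ^ 2))
        * ‖ε⁻¹ • v0 - Rrot (E x0)‖) := by
  set w := ε⁻¹ • v0 - Rrot (E x0)
  have hlam0 : 0 < lam := by rw [hlam]; positivity
  have hshift : y0 - x0 = (Δt / lam) • Rrot w := by
    have hεsq : ε ^ 2 = Δt / lam := by rw [hlam]; field_simp
    rw [hy0, shifted_sub_eq_sq_smul_Rrot hε.ne', hεsq]
  have hy0' : y0 = x0 + Δt • lam⁻¹ • Rrot w := by
    rw [← mul_smul, ← div_eq_mul_inv, ← hshift, add_sub_cancel]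
  have hdist : ‖x0 - y0‖ = Δt / lam * ‖w‖ := by
    rw [norm_sub_rev, hshift, norm_smul, Real.norm_of_nonneg (by positivity), Rrot.norm_eq]
  have hz1w := norm_sub_inv_smul_Rrot_le hlam0 hz1
  refine ⟨eq_inv_smul_Rrot_sub_of_sub_smul_Rrot_eq hlam0.ne' hz1, hz1w, ?_⟩
  rw [hx1, hy1]
  calc _ ≤ Δt * ‖z1 - lam⁻¹ • Rrot w‖ + Δt * (Kx * ‖x0 - y0‖) :=
        norm_euler_step_sub_euler_step_le hΔt.le hlip hy0' z1
    _ ≤ Δt * (lam⁻¹ * ((1 + lam) / (1 + lam ^ 2)) * ‖w‖) + Δt * (Kx * (Δt / lam * ‖w‖)) := by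
        rw [hdist]; gcongr
    _ = (Δt / lam) * (Kx * Δt + (1 + lam) / (1 + lam ^ 2)) * ‖w‖ := by ring

/-- Modified initial data improvement (constant-field setting of Theorem
4.1): with `z¹ = [Id − λR]⁻¹ w`, `w = ε⁻¹v⁰ − R[E(x⁰)]`, one has
`z¹ = (1/λ)Rw − (1/λ)R z¹`, hence `‖z¹ − (1/λ)Rw‖ ≤ (1/λ)((1+λ)/(1+λ²))‖w‖`,
and the first-step error of the scheme started from the shifted point
`y⁰ = x⁰ + ε(v⁰ ∧ B + ε E(x⁰))` satisfies
`‖x¹ − y¹‖ ≤ (Δt/λ)(K_x Δt + (1+λ)/(1+λ²))‖w‖`. -/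
theorem stmt17 (ε Δt lam Kx : ℝ) (hε : 0 < ε) (hΔt : 0 < Δt)
    (hlam : lam = Δt / ε ^ 2) (hKx : 0 ≤ Kx)
    (E : ℂ → ℂ)
    (hlip : ∀ a b : ℂ, ‖Rrot (E a) - Rrot (E b)‖ ≤ Kx * ‖a - b‖)
    (x0 v0 z1 x1 y0 y1 : ℂ)
    (hz1 : z1 - lam • Rrot z1 = ε⁻¹ • v0 - Rrot (E x0))
    (hx1 : x1 = x0 + Δt • Rrot (E x0) + Δt • z1)
    (hy0 : y0 = x0 + ε • (Rrot v0 + ε • E x0))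
    (hy1 : y1 = y0 + Δt • Rrot (E y0)) :
    (z1 = lam⁻¹ • Rrot (ε⁻¹ • v0 - Rrot (E x0)) - lam⁻¹ • Rrot z1) ∧
    (‖z1 - lam⁻¹ • Rrot (ε⁻¹ • v0 - Rrot (E x0))‖
        ≤ lam⁻¹ * ((1 + lam) / (1 + lam ^ 2)) * ‖ε⁻¹ • v0 - Rrot (E x0)‖) ∧
    (‖x1 - y1‖ ≤ (Δt / lam) * (Kx * Δt + (1 + lam) / (1 + lam ^ 2))
        * ‖ε⁻¹ • v0 - Rrot (E x0)‖) :=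
  stmt17_general ε Δt lam Kx hε hΔt hlam E hlip x0 v0 z1 x1 y0 y1 hz1 hx1 hy0 hy1
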